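/- Let X = X₀·U² and Y = Y₀, where X₀ = [[0,1,0],[1,0,0],[0,0,t]], Y₀ = [[1,0,0],[0,0,1],[0,t,0]], and U = [[0,0,t⁻¹],[1,0,0],[0,t,0]] over ℤ[t,t⁻¹]. Then for every integer i ≥ 1, Y^i · X ≠ X · Y^i. -/

import Mathlib

open Matrix LaurentPolynomial

/-!
Here `X = X₀ U² = [[0, 0, t⁻¹], [0, 1, 0], [t², 0, 0]]`, so comparing the `(2, 0)` entries of
`A X` and `X A` shows that any `A` commuting with `X` has `A₂₂ = A₀₀` (since `t²` is a unit).
For `A = Yⁱ` this fails: `Y` fixes `e₀`, so `(Yⁱ)₀₀ = 1`, while `Y² = diag(1, t, t)` makes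
`(Yⁱ)₂₂` equal to `t^(i/2)` for even `i` and `0` for odd `i`.
-/

theorem LaurentPolynomial.T_injective {R : Type*} [Semiring R] [Nontrivial R] :
    Function.Injective (T : ℤ → R[T;T⁻¹]) :=
  fun _ _ h => AddMonoidAlgebra.single_left_injective one_ne_zero h

theorem Matrix.apply_two_two_eq_of_commute_antidiagonal {R : Type*} [CommRing R]
    {A : Matrix (Fin 3) (Fin 3) R} {a b c : R} (hb : IsLeftRegular b)
    (h : A * !![0, 0, a; 0, c, 0; b, 0, 0] = !![0, 0, a; 0, c, 0; b, 0, 0] * A) :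
    A 2 2 = A 0 0 := by
  have h20 := congrFun (congrFun h 2) 0
  simp only [mul_apply, Fin.sum_univ_three, of_apply, cons_val', cons_val_zero, cons_val_one,
    cons_val_two, empty_val', cons_val_fin_one, head_cons, tail_cons, head_fin_const,
    mul_zero, zero_mul, zero_add, add_zero] at h20
  exact hb (by linear_combination h20)

namespace TongYangMa

noncomputable section

def X₀ : Matrix (Fin 3) (Fin 3) ℤ[T;T⁻¹] := !![0, 1, 0; 1, 0, 0; 0, 0, T 1]

def Y₀ : Matrix (Fin 3) (Fin 3) ℤ[T;T⁻¹] := !![1, 0, 0; 0, 0, 1; 0, T 1, 0]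

def U : Matrix (Fin 3) (Fin 3) ℤ[T;T⁻¹] := !![0, 0, T (-1); 1, 0, 0; 0, T 1, 0]

theorem X₀_mul_U_sq : X₀ * U ^ 2 = !![0, 0, T (-1); 0, 1, 0; T 2, 0, 0] := by
  rw [X₀, U, sq, mul_fin_three, mul_fin_three]
  simp only [one_mul, mul_one, zero_mul, mul_zero, add_zero, zero_add, ← T_add]
  norm_num

theorem Y₀_sq : Y₀ ^ 2 = diagonal ![1, T 1, T 1] := by
  ext i j
  fin_cases i <;> fin_cases j <;> simp [Y₀, sq, mul_apply, Fin.sum_univ_three]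

theorem Y₀_pow_two_mul (k : ℕ) : Y₀ ^ (2 * k) = diagonal ![1, T k, T k] := by
  rw [pow_mul, Y₀_sq, diagonal_pow]
  congr 1
  ext j
  fin_cases j <;> simp [T_pow]

theorem Y₀_pow_apply_zero_zero (i : ℕ) : (Y₀ ^ i) 0 0 = 1 := by
  obtain ⟨k, rfl | rfl⟩ := Nat.even_or_odd' i
  · simp [Y₀_pow_two_mul]
  · rw [pow_succ, Y₀_pow_two_mul]
    simp [Y₀, mul_apply, Fin.sum_univ_three]

theorem Y₀_pow_apply_two_two_ne_one {i : ℕ} (hi : i ≠ 0) : (Y₀ ^ i) 2 2 ≠ 1 := by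
  obtain ⟨k, rfl | rfl⟩ := Nat.even_or_odd' i
  · have hk : (k : ℤ) ≠ 0 := by omega
    simpa [Y₀_pow_two_mul, ← T_zero] using T_injective.ne hk
  · rw [pow_succ, Y₀_pow_two_mul]
    simp [Y₀, mul_apply, Fin.sum_univ_three]

end

end TongYangMa

/-- Case (b): X = X₀·U², Y = Y₀.  Then Y^i · X ≠ X · Y^i for every i ≥ 1. -/
theorem stmt6 :
    let X₀ : Matrix (Fin 3) (Fin 3) (LaurentPolynomial ℤ) := !![0, 1, 0; 1, 0, 0; 0, 0, T 1]
    let Y₀ : Matrix (Fin 3) (Fin 3) (LaurentPolynomial ℤ) := !![1, 0, 0; 0, 0, 1; 0, T 1, 0]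
    let U : Matrix (Fin 3) (Fin 3) (LaurentPolynomial ℤ) := !![0, 0, T (-1); 1, 0, 0; 0, T 1, 0]
    let X := X₀ * U ^ 2
    let Y := Y₀
    ∀ i : ℕ, 1 ≤ i → Y ^ i * X ≠ X * Y ^ i := by
  intro X₀ Y₀ U X Y i hi h
  have hX : X = !![0, 0, T (-1); 0, 1, 0; T 2, 0, 0] := TongYangMa.X₀_mul_U_sq
  rw [hX] at h
  have h22 := apply_two_two_eq_of_commute_antidiagonal (isUnit_T 2).isRegular.left h
  exact TongYangMa.Y₀_pow_apply_two_two_ne_one (by omega)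
    (h22.trans (TongYangMa.Y₀_pow_apply_zero_zero i))
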